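/- arXiv:math/0310312 — 2 statements merged into one kernel-verified Lean document; each statement's English description precedes it below -/
import Mathlib

section
/- Let U₀, V₀, W₀ be Banach spaces over 𝕜 = ℝ or ℂ and set U := (U₀)*, V := (V₀)*, W := (W₀)*, so that U₀, V₀, W₀ are preduals of U, V, W; regard U₀ ⊆ U*, V₀ ⊆ V*, W₀ ⊆ W* via the canonical embeddings into the double duals. Suppose ι : U → V and π : V → W are continuous linear maps with ι injective, range ι = ker π, and π surjective, and suppose the dual maps preserve the preduals: π*(W₀) ⊆ V₀ and ι*(V₀) ⊆ U₀. Let π₀ : W₀ → V₀ and ι₀ : V₀ → U₀ denote the restrictions of π* and ι*. Then the sequence 0 → W₀ → V₀ → U₀ → 0 is exact: π₀ is injective, range π₀ = ker ι₀, and ι₀ is surjective. -/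
open NormedSpace

variable {𝕜 : Type*} [RCLike 𝕜]

/-- The dual map `f* : F* → E*`, `f*(μ) = μ ∘ f`, of a continuous linear map `f : E → F`. -/
noncomputable def dualMap {E F : Type*} [NormedAddCommGroup E] [NormedSpace 𝕜 E]
    [NormedAddCommGroup F] [NormedSpace 𝕜 F] (f : E →L[𝕜] F) :
    StrongDual 𝕜 F →L[𝕜] StrongDual 𝕜 E :=
  (ContinuousLinearMap.compL 𝕜 E F 𝕜).flip f

/-!
The compatibility hypotheses say exactly that `ι = ι₀*` and `π = π₀*`, so everything is about
adjoints of operators between Banach spaces. Since `π₀*` is onto, the open mapping theorem and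
Hahn–Banach bound `π₀` below, so `π₀` is injective with closed range, and separating points from
that closed range by functionals gives exactness at `V₀`. Since `ι₀*` is injective, `ι₀` has dense
range. The range of `ι₀*` is `ker π₀*`, which is closed and (as `ker ι₀ = range π₀`) is the
annihilator of `ker ι₀`; so `ι₀*` is bounded below, and dualizing once more gives
`‖[v]‖ ≤ K ‖ι₀ v‖` in `V₀ ⧸ ker ι₀`. Hence `ι₀` also has closed range, so it is onto.
-/
open Function Set

section
variable {E F : Type*} [NormedAddCommGroup E] [NormedSpace 𝕜 E]
  [NormedAddCommGroup F] [NormedSpace 𝕜 F]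

@[simp]
lemma dualMap_apply (T : E →L[𝕜] F) (g : StrongDual 𝕜 F) (x : E) : dualMap T g x = g (T x) :=
  rfl

lemma eq_dualMap_of_inclusionInDoubleDual {T : StrongDual 𝕜 E →L[𝕜] StrongDual 𝕜 F}
    {T₀ : F →L[𝕜] E}
    (h : ∀ y, inclusionInDoubleDual 𝕜 E (T₀ y) = dualMap T (inclusionInDoubleDual 𝕜 F y)) :
    T = dualMap T₀ := by
  ext g y
  simpa using (DFunLike.congr_fun (h y) g).symm

lemma exists_dual_norm_le_one_forall_mem_eq_zero_apply_eq_norm_mk (S : Submodule 𝕜 E) (x : E) :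
    ∃ f : StrongDual 𝕜 E, ‖f‖ ≤ 1 ∧ (∀ s ∈ S, f s = 0) ∧ f x = ‖S.mkQ x‖ := by
  obtain ⟨g, hg, hgx⟩ := exists_dual_vector'' 𝕜 (S.mkQ x)
  have hmk : ‖S.mkQL‖ ≤ 1 :=
    ContinuousLinearMap.opNorm_le_bound _ zero_le_one fun y => by
      simpa using Submodule.Quotient.norm_mk_le S y
  refine ⟨g.comp S.mkQL, ?_, fun s hs => ?_, hgx⟩
  · calc ‖g.comp S.mkQL‖ ≤ ‖g‖ * ‖S.mkQL‖ := g.opNorm_comp_le _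
      _ ≤ 1 := mul_le_one₀ hg (norm_nonneg _) hmk
  · simp [(Submodule.Quotient.mk_eq_zero S).mpr hs]

lemma exists_dual_forall_mem_eq_zero_apply_ne_zero {S : Submodule 𝕜 E}
    (hS : IsClosed (S : Set E)) {x : E} (hx : x ∉ S) :
    ∃ f : StrongDual 𝕜 E, (∀ s ∈ S, f s = 0) ∧ f x ≠ 0 := by
  obtain ⟨f, -, hSf, hfx⟩ := exists_dual_norm_le_one_forall_mem_eq_zero_apply_eq_norm_mk S x
  refine ⟨f, hSf, ?_⟩
  rw [hfx, RCLike.ofReal_ne_zero]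
  exact fun h => hx ((QuotientAddGroup.norm_mk_eq_zero (hS := hS)).mp h)

lemma antilipschitz_of_surjective_dualMap {T : E →L[𝕜] F} (h : Surjective (dualMap T)) :
    ∃ K, AntilipschitzWith K T := by
  obtain ⟨C, hC0, hC⟩ := (dualMap T).exists_preimage_norm_le h
  refine ⟨⟨C, hC0.le⟩, T.antilipschitz_of_bound fun x => ?_⟩
  obtain ⟨g, hg, hgx⟩ := exists_dual_vector'' 𝕜 x
  obtain ⟨f, rfl, hf⟩ := hC g
  calc ‖x‖ = ‖f (T x)‖ := by simp [← dualMap_apply, hgx]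
    _ ≤ ‖f‖ * ‖T x‖ := f.le_opNorm _
    _ ≤ C * ‖T x‖ := by gcongr; exact hf.trans (mul_le_of_le_one_right hC0.le hg)

lemma denseRange_of_injective_dualMap {T : E →L[𝕜] F} (h : Injective (dualMap T)) :
    DenseRange T := by
  intro y
  by_contra hy
  obtain ⟨f, hf, hfy⟩ := exists_dual_forall_mem_eq_zero_apply_ne_zero
    (Submodule.isClosed_topologicalClosure T.range) (x := y) hy
  have hTf : dualMap T f = dualMap T 0 := by
    ext x
    exact hf _ (Submodule.le_topologicalClosure _ ⟨x, rfl⟩)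
  exact hfy (by simp [h hTf])

lemma isClosed_annihilator (S : Set E) : IsClosed {f : StrongDual 𝕜 E | ∀ x ∈ S, f x = 0} := by
  simp only [ofPred_forall]
  exact isClosed_biInter fun x _ => isClosed_eq (continuous_eval_const x) continuous_const

lemma norm_mk_ker_le {T : E →L[𝕜] F} {K : NNReal} (hK : AntilipschitzWith K (dualMap T))
    (hann : ∀ f : StrongDual 𝕜 E, (∀ x ∈ T.ker, f x = 0) → f ∈ range (dualMap T)) (x : E) :
    ‖T.ker.mkQ x‖ ≤ K * ‖T x‖ := by
  obtain ⟨f, hf, hker, hfx⟩ := exists_dual_norm_le_one_forall_mem_eq_zero_apply_eq_norm_mk T.ker x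
  obtain ⟨g, rfl⟩ := hann f hker
  calc ‖T.ker.mkQ x‖ = ‖g (T x)‖ := by simp [← dualMap_apply, hfx]
    _ ≤ ‖g‖ * ‖T x‖ := g.le_opNorm _
    _ ≤ K * ‖T x‖ := by
        gcongr
        exact (hK.le_mul_norm (map_zero _) g).trans (mul_le_of_le_one_right K.2 hf)

lemma isClosed_range_of_norm_mk_ker_le [CompleteSpace E] {T : E →L[𝕜] F} {K : NNReal}
    (h : ∀ x, ‖T.ker.mkQ x‖ ≤ K * ‖T x‖) : IsClosed (range T) := by
  let T' := T.ker.liftQL T le_rfl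
  have hT' : AntilipschitzWith K T' :=
    AddMonoidHomClass.antilipschitz_of_bound T' fun x => by
      induction x using Submodule.Quotient.induction_on with | H x => exact h x
  have hrange : range T' = range T := (T.ker.mkQ_surjective.range_comp T').symm
  exact hrange ▸ hT'.isClosed_range T'.uniformContinuous

lemma surjective_of_injective_dualMap [CompleteSpace E] {T : E →L[𝕜] F}
    (hinj : Injective (dualMap T))
    (hann : ∀ f : StrongDual 𝕜 E, (∀ x ∈ T.ker, f x = 0) → f ∈ range (dualMap T)) :
    Surjective T := by
  have hrange : range (dualMap T) = {f | ∀ x ∈ T.ker, f x = 0} :=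
    subset_antisymm (by rintro _ ⟨g, rfl⟩ x (hx : T x = 0); simp [hx]) hann
  obtain ⟨K, hK⟩ := (dualMap T).antilipschitz_of_injective_of_isClosed_range hinj
    (hrange ▸ isClosed_annihilator _)
  have hclosed := isClosed_range_of_norm_mk_ker_le (norm_mk_ker_le hK hann)
  rw [← range_eq_univ, ← hclosed.closure_eq]
  exact (denseRange_of_injective_dualMap hinj).closure_range
end

lemma range_eq_ker_of_range_dualMap_eq_ker {U V W : Type*}
    [NormedAddCommGroup U] [NormedSpace 𝕜 U] [NormedAddCommGroup V] [NormedSpace 𝕜 V]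
    [NormedAddCommGroup W] [NormedSpace 𝕜 W] {S : W →L[𝕜] V} {T : V →L[𝕜] U}
    (hS : IsClosed (range S)) (h : range (dualMap T) = {g | dualMap S g = 0}) :
    range S = {v | T v = 0} := by
  have hTS : ∀ u : StrongDual 𝕜 U, dualMap S (dualMap T u) = 0 := fun u =>
    (h.subset (mem_range_self u) :)
  refine subset_antisymm ?_ fun v (hv : T v = 0) => ?_
  · rintro _ ⟨w, rfl⟩
    refine SeparatingDual.eq_zero_of_forall_dual_eq_zero (R := 𝕜) fun u => ?_
    simpa using DFunLike.congr_fun (hTS u) w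
  · by_contra hvS
    obtain ⟨f, hf, hfv⟩ := exists_dual_forall_mem_eq_zero_apply_ne_zero (S := S.range) hS hvS
    obtain ⟨u, rfl⟩ : f ∈ range (dualMap T) := h ▸ ContinuousLinearMap.ext fun w => hf _ ⟨w, rfl⟩
    exact hfv (by simp [hv])

theorem predual_sequence_exact_general {U₀ V₀ W₀ : Type*}
    [NormedAddCommGroup U₀] [NormedSpace 𝕜 U₀]
    [NormedAddCommGroup V₀] [NormedSpace 𝕜 V₀] [CompleteSpace V₀]
    [NormedAddCommGroup W₀] [NormedSpace 𝕜 W₀] [CompleteSpace W₀]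
    (ι : StrongDual 𝕜 U₀ →L[𝕜] StrongDual 𝕜 V₀) (π : StrongDual 𝕜 V₀ →L[𝕜] StrongDual 𝕜 W₀)
    (hι : Function.Injective ι)
    (hexact : Set.range ι = {v : StrongDual 𝕜 V₀ | π v = 0})
    (hπ : Function.Surjective π)
    -- `π₀ : W₀ → V₀` is the restriction of `π*` to the preduals:
    (π₀ : W₀ →L[𝕜] V₀)
    (hπ₀ : ∀ w : W₀,
      inclusionInDoubleDual 𝕜 V₀ (π₀ w) = dualMap π (inclusionInDoubleDual 𝕜 W₀ w))
    -- `ι₀ : V₀ → U₀` is the restriction of `ι*` to the preduals: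
    (ι₀ : V₀ →L[𝕜] U₀)
    (hι₀ : ∀ v : V₀,
      inclusionInDoubleDual 𝕜 U₀ (ι₀ v) = dualMap ι (inclusionInDoubleDual 𝕜 V₀ v)) :
    Function.Injective π₀ ∧
      Set.range π₀ = {v : V₀ | ι₀ v = 0} ∧
      Function.Surjective ι₀ := by
  obtain rfl := eq_dualMap_of_inclusionInDoubleDual hι₀
  obtain rfl := eq_dualMap_of_inclusionInDoubleDual hπ₀
  obtain ⟨K, hK⟩ := antilipschitz_of_surjective_dualMap hπ
  have hmiddle :=
    range_eq_ker_of_range_dualMap_eq_ker (hK.isClosed_range π₀.uniformContinuous) hexact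
  refine ⟨hK.injective, hmiddle, surjective_of_injective_dualMap hι fun f hf => ?_⟩
  rw [hexact]
  ext w
  exact hf _ (hmiddle.subset (mem_range_self w))

/-- If `0 → U → V → W → 0` is an exact sequence of dual Banach spaces
(`U = (U₀)*`, `V = (V₀)*`, `W = (W₀)*`) whose dual maps preserve the preduals
(`π*(W₀) ⊆ V₀`, `ι*(V₀) ⊆ U₀`, where the preduals are regarded as subspaces of the duals
via the canonical embeddings into the double duals), then the restricted predual sequence
`0 → W₀ → V₀ → U₀ → 0` is exact. -/
theorem predual_sequence_exact {U₀ V₀ W₀ : Type*}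
    [NormedAddCommGroup U₀] [NormedSpace 𝕜 U₀] [CompleteSpace U₀]
    [NormedAddCommGroup V₀] [NormedSpace 𝕜 V₀] [CompleteSpace V₀]
    [NormedAddCommGroup W₀] [NormedSpace 𝕜 W₀] [CompleteSpace W₀]
    (ι : StrongDual 𝕜 U₀ →L[𝕜] StrongDual 𝕜 V₀) (π : StrongDual 𝕜 V₀ →L[𝕜] StrongDual 𝕜 W₀)
    (hι : Function.Injective ι)
    (hexact : Set.range ι = {v : StrongDual 𝕜 V₀ | π v = 0})
    (hπ : Function.Surjective π)
    -- `π₀ : W₀ → V₀` is the restriction of `π*` to the preduals: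
    (π₀ : W₀ →L[𝕜] V₀)
    (hπ₀ : ∀ w : W₀,
      inclusionInDoubleDual 𝕜 V₀ (π₀ w) = dualMap π (inclusionInDoubleDual 𝕜 W₀ w))
    -- `ι₀ : V₀ → U₀` is the restriction of `ι*` to the preduals:
    (ι₀ : V₀ →L[𝕜] U₀)
    (hι₀ : ∀ v : V₀,
      inclusionInDoubleDual 𝕜 U₀ (ι₀ v) = dualMap ι (inclusionInDoubleDual 𝕜 V₀ v)) :
    Function.Injective π₀ ∧
      Set.range π₀ = {v : V₀ | ι₀ v = 0} ∧
      Function.Surjective ι₀ :=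
  predual_sequence_exact_general ι π hι hexact hπ π₀ hπ₀ ι₀ hι₀
end

section
/- Let A be an associative (not necessarily commutative) ring, let p ∈ A be an idempotent (p² = p), and set q := 1 − p. On the set of pairs (ρ, X) with ρ ∈ pAp and X ∈ A, define the bracket [(ρ, X), (ρ', X')] := (−(ρρ' − ρ'ρ) + [pXp, ρ'] − [pX'p, ρ] + pXqX'p − pX'qXp, [X, X']), where [a, b] = ab − ba. Then this bracket is bilinear, alternating, and satisfies the Jacobi identity; that is, it makes pAp × A into a Lie ring (a Lie algebra over the center of A). -/
/-!
In the coordinates `σ := pXp − ρ` the bracket becomes the commutator bracket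
`[(σ, X), (σ', X')] = ([σ, σ'], [X, X'])` of the ring `A × A`: indeed
`pXqX'p − pX'qXp = p[X, X']p − [pXp, pX'p]`, so the first component of the bracket is
`p[X, X']p − [pXp − ρ, pX'p − ρ']`. The map `(ρ, X) ↦ (pXp − ρ, X)` is additive and injective,
so all the Lie ring axioms are inherited from `A × A`.
-/

/-- The corner `pAp = {a ∈ A | pap = a}` of a ring `A` determined by an idempotent `p`,
as an additive subgroup of `A`. -/
def corner {A : Type*} [Ring A] (p : A) : AddSubgroup A where
  carrier := {a : A | p * a * p = a}
  add_mem' := by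
    intro a b ha hb
    simp only [Set.mem_setOf_eq] at *
    rw [mul_add, add_mul, ha, hb]
  zero_mem' := by simp
  neg_mem' := by
    intro a ha
    simp only [Set.mem_setOf_eq] at *
    rw [mul_neg, neg_mul, ha]

section BracketOfInjective

variable {M L : Type*} [AddCommGroup M] [LieRing L] {f : M →+ L} {br : M → M → M}

theorem Function.Injective.bracket_add_left (hf : Function.Injective f)
    (hbr : ∀ x y, f (br x y) = ⁅f x, f y⁆) (x y z : M) : br (x + y) z = br x z + br y z :=
  hf <| by simp only [hbr, map_add, add_lie]

theorem Function.Injective.bracket_add_right (hf : Function.Injective f)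
    (hbr : ∀ x y, f (br x y) = ⁅f x, f y⁆) (x y z : M) : br x (y + z) = br x y + br x z :=
  hf <| by simp only [hbr, map_add, lie_add]

theorem Function.Injective.bracket_self (hf : Function.Injective f)
    (hbr : ∀ x y, f (br x y) = ⁅f x, f y⁆) (x : M) : br x x = 0 :=
  hf <| by rw [hbr, lie_self, map_zero]

theorem Function.Injective.bracket_jacobi (hf : Function.Injective f)
    (hbr : ∀ x y, f (br x y) = ⁅f x, f y⁆) (x y z : M) :
    br (br x y) z + br (br y z) x + br (br z x) y = 0 :=
  hf <| by
    simp only [hbr, map_add, map_zero]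
    rw [← lie_skew ⁅f x, f y⁆, ← lie_skew ⁅f y, f z⁆, ← lie_skew ⁅f z, f x⁆, ← neg_eq_zero,
      ← lie_jacobi (f x) (f y) (f z)]
    abel

end BracketOfInjective

section Corner

variable {A : Type*} [Ring A] {p : A}

theorem mem_corner {a : A} : a ∈ corner p ↔ p * a * p = a := Iff.rfl

theorem mul_mul_mem_corner (hp : p * p = p) (a : A) : p * a * p ∈ corner p := by
  rw [mem_corner, mul_assoc, mul_assoc, hp, ← mul_assoc, ← mul_assoc, hp]

theorem idem_mul_of_mem_corner (hp : p * p = p) {a : A} (ha : a ∈ corner p) : p * a = a := by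
  rw [← mem_corner.mp ha, ← mul_assoc, ← mul_assoc, hp]

theorem mul_idem_of_mem_corner (hp : p * p = p) {a : A} (ha : a ∈ corner p) : a * p = a := by
  rw [← mem_corner.mp ha, mul_assoc, hp]

theorem mul_mem_corner (hp : p * p = p) {a b : A} (ha : a ∈ corner p) (hb : b ∈ corner p) :
    a * b ∈ corner p := by
  rw [mem_corner, mul_assoc, mul_assoc, mul_idem_of_mem_corner hp hb,
    ← mul_assoc, idem_mul_of_mem_corner hp ha]

theorem lie_mem_corner (hp : p * p = p) {a b : A} (ha : a ∈ corner p) (hb : b ∈ corner p) :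
    ⁅a, b⁆ ∈ corner p := by
  rw [Ring.lie_def]
  exact sub_mem (mul_mem_corner hp ha hb) (mul_mem_corner hp hb ha)

variable (p) in
def cornerCoords : ↥(corner p) × A →+ A × A where
  toFun x := (p * x.2 * p - x.1, x.2)
  map_zero' := by simp
  map_add' x y := by
    ext
    · simp only [Prod.fst_add, Prod.snd_add, AddSubgroup.coe_add, mul_add, add_mul]
      abel
    · rfl

theorem cornerCoords_injective : Function.Injective (cornerCoords p) := by
  rintro ⟨ρ, X⟩ ⟨ρ', X'⟩ h
  obtain ⟨hρ, rfl : X = X'⟩ := Prod.ext_iff.mp h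
  exact Prod.ext (Subtype.ext (sub_right_injective hρ)) rfl

def cornerBracket (hp : p * p = p) (x y : ↥(corner p) × A) : ↥(corner p) × A :=
  (⟨p * ⁅x.2, y.2⁆ * p - ⁅(cornerCoords p x).1, (cornerCoords p y).1⁆,
    sub_mem (mul_mul_mem_corner hp _)
      (lie_mem_corner hp (sub_mem (mul_mul_mem_corner hp _) x.1.2)
        (sub_mem (mul_mul_mem_corner hp _) y.1.2))⟩, ⁅x.2, y.2⁆)

theorem cornerCoords_cornerBracket (hp : p * p = p) (x y : ↥(corner p) × A) :
    cornerCoords p (cornerBracket hp x y) = ⁅cornerCoords p x, cornerCoords p y⁆ := by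
  ext
  · exact sub_sub_cancel _ _
  · rfl

theorem coe_cornerBracket_fst (hp : p * p = p) (x y : ↥(corner p) × A) :
    ((cornerBracket hp x y).1 : A) =
      -((x.1 : A) * (y.1 : A) - (y.1 : A) * (x.1 : A))
        + ⁅p * x.2 * p, (y.1 : A)⁆ - ⁅p * y.2 * p, (x.1 : A)⁆
        + p * x.2 * (1 - p) * y.2 * p - p * y.2 * (1 - p) * x.2 * p := by
  have hpXp : ∀ X Y : A, p * X * p * (p * Y * p) = p * X * p * Y * p := fun X Y => by
    simp only [← mul_assoc]
    rw [mul_assoc (p * X) p p, hp]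
  simp only [cornerBracket, cornerCoords, AddMonoidHom.coe_mk, ZeroHom.coe_mk, Ring.lie_def,
    mul_sub, sub_mul, hpXp]
  noncomm_ring

end Corner

/-- Let `A` be an associative unital ring, `p` an idempotent, `q := 1 - p`.  On pairs
`(ρ, X)` with `ρ ∈ pAp` and `X ∈ A`, the bracket
`[(ρ, X), (ρ', X')] := (−(ρρ' − ρ'ρ) + [pXp, ρ'] − [pX'p, ρ] + pXqX'p − pX'qXp, [X, X'])`
is well defined (its first component again lies in `pAp`), biadditive, alternating, and
satisfies the Jacobi identity; that is, it makes `pAp × A` into a Lie ring. -/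
theorem corner_extension_lieRing {A : Type*} [Ring A] (p : A) (hp : p * p = p) :
    ∃ br : ↥(corner p) × A → ↥(corner p) × A → ↥(corner p) × A,
      (∀ x y : ↥(corner p) × A,
          (((br x y).1 : A) =
              -((x.1 : A) * (y.1 : A) - (y.1 : A) * (x.1 : A))
                + ⁅p * x.2 * p, (y.1 : A)⁆ - ⁅p * y.2 * p, (x.1 : A)⁆
                + p * x.2 * (1 - p) * y.2 * p - p * y.2 * (1 - p) * x.2 * p) ∧
            (br x y).2 = ⁅x.2, y.2⁆) ∧
      (∀ x y z : ↥(corner p) × A, br (x + y) z = br x z + br y z) ∧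
      (∀ x y z : ↥(corner p) × A, br x (y + z) = br x y + br x z) ∧
      (∀ x : ↥(corner p) × A, br x x = 0) ∧
      (∀ x y z : ↥(corner p) × A,
        br (br x y) z + br (br y z) x + br (br z x) y = 0) := by
  let _ : LieRing (A × A) := LieRing.ofAssociativeRing
  have hinj := cornerCoords_injective (p := p)
  have hbr := cornerCoords_cornerBracket hp
  exact ⟨cornerBracket hp, fun x y => ⟨coe_cornerBracket_fst hp x y, rfl⟩,
    hinj.bracket_add_left hbr, hinj.bracket_add_right hbr, hinj.bracket_self hbr,
    hinj.bracket_jacobi hbr⟩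
end
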